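/- arXiv:2509.19683 — 2 statements merged into one kernel-verified Lean document; each statement's English description precedes it below -/
import Mathlib

section
/- Let α(h) denote the vertex cover number of a perfect binary tree of height h. Then for all h > 2, α(h) = min{1 + 2·α(h-1), 2 + 4·α(h-2)}. -/
/-- The perfect binary tree of height `h`, on vertex set `Fin (2^(h+1) - 1)`
with heap indexing: the children of vertex `i` are `2*i+1` and `2*i+2`. -/
def perfectBinaryTree (h : ℕ) : SimpleGraph (Fin (2 ^ (h + 1) - 1)) :=
  SimpleGraph.fromRel (fun i j => (j : ℕ) = 2 * (i : ℕ) + 1 ∨ (j : ℕ) = 2 * (i : ℕ) + 2)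

/-- The height of a vertex (in heap indexing) is `log₂ (v+1)`. -/
def heapHeight {n : ℕ} (v : Fin n) : ℕ := Nat.log 2 ((v : ℕ) + 1)

variable {V : Type*}

/-- A vertex cover of a graph: a set of vertices meeting every edge. -/
def SimpleGraph.IsVertexCover' (G : SimpleGraph V) (C : Finset V) : Prop :=
  ∀ ⦃u v : V⦄, G.Adj u v → u ∈ C ∨ v ∈ C

/-- A minimal vertex cover: no proper subset is a vertex cover. -/
def SimpleGraph.IsMinimalVertexCover (G : SimpleGraph V) (C : Finset V) : Prop :=
  G.IsVertexCover' C ∧ ∀ D : Finset V, D ⊂ C → ¬ G.IsVertexCover' D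

/-- The number of minimal vertex covers of a graph. -/
noncomputable def SimpleGraph.numMinimalVertexCovers (G : SimpleGraph V) : ℕ :=
  {C : Finset V | G.IsMinimalVertexCover C}.ncard

/-- The vertex cover number: smallest cardinality of a vertex cover. -/
noncomputable def SimpleGraph.vertexCoverNumber (G : SimpleGraph V) : ℕ :=
  sInf {k | ∃ C : Finset V, G.IsVertexCover' C ∧ C.card = k}

/-- An independent set: no two of its vertices are adjacent. -/
def SimpleGraph.IsIndepSet' (G : SimpleGraph V) (W : Finset V) : Prop :=
  ∀ u ∈ W, ∀ v ∈ W, ¬ G.Adj u v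

/-- A maximal independent set. -/
def SimpleGraph.IsMaximalIndepSet (G : SimpleGraph V) (W : Finset V) : Prop :=
  G.IsIndepSet' W ∧ ∀ D : Finset V, W ⊂ D → ¬ G.IsIndepSet' D

/-- The independence number: largest cardinality of an independent set. -/
noncomputable def SimpleGraph.indepNumber (G : SimpleGraph V) : ℕ :=
  sSup {k | ∃ W : Finset V, G.IsIndepSet' W ∧ W.card = k}

/-- The minimum size of a maximal independent set. -/
noncomputable def SimpleGraph.minMaximalIndepSetSize (G : SimpleGraph V) : ℕ :=
  sInf {k | ∃ W : Finset V, G.IsMaximalIndepSet W ∧ W.card = k}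

/-- The matching number: largest cardinality of a set of pairwise disjoint edges. -/
noncomputable def SimpleGraph.matchingNumber (G : SimpleGraph V) : ℕ :=
  sSup {k | ∃ M : Finset (Sym2 V), (↑M : Set (Sym2 V)) ⊆ G.edgeSet ∧
    ((↑M : Set (Sym2 V)).Pairwise fun e f => ∀ v : V, v ∈ e → v ∉ f) ∧ M.card = k}

/-!
In heap indexing the subtree rooted at `m` has height `h - log₂ (m + 1)`. The vertices whose
subtree has odd height form a vertex cover, and joining each of them to its left child gives
equally many pairwise disjoint edges, so this cover is optimal. Passing from height `h` to
`h + 1` exchanges odd and even heights among the old vertices and adds leaves of height `0`, whence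
`α(h + 1) + α(h) = 2 ^ (h + 1) - 1` and `3 α(h) + 2 = 2 ^ (h + 1) + h % 2`; the recurrence
is arithmetic from there.
-/

open Finset

namespace SimpleGraph

variable {G : SimpleGraph V}

theorem vertexCoverNumber_eq_card {C : Finset V} (hC : G.IsVertexCover' C)
    (hmin : ∀ D : Finset V, G.IsVertexCover' D → #C ≤ #D) :
    G.vertexCoverNumber = #C :=
  le_antisymm (Nat.sInf_le ⟨C, hC, rfl⟩)
    (le_csInf ⟨_, C, hC, rfl⟩ fun _ ⟨D, hD, hk⟩ => hk ▸ hmin D hD)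

/-- The edges `{v, f v}`, `v ∈ S`, form a matching. -/
theorem IsVertexCover'.matching_card_le {S C : Finset V} (hC : G.IsVertexCover' C) (f : V → V)
    (hadj : ∀ v ∈ S, G.Adj v (f v)) (hinj : Set.InjOn f S) (hdisj : ∀ v ∈ S, f v ∉ S) :
    #S ≤ #C := by
  classical
  refine card_le_card_of_injOn (fun v => if v ∈ C then v else f v) (fun v hv => ?_) ?_
  · dsimp only
    split_ifs with hvC
    · exact hvC
    · exact (hC (hadj v hv)).resolve_left hvC
  · intro v hv w hw hvw
    dsimp only at hvw
    split_ifs at hvw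
    · exact hvw
    · exact absurd (hvw ▸ hv) (hdisj w hw)
    · exact absurd (hvw ▸ hw) (hdisj v hv)
    · exact hinj hv hw hvw

end SimpleGraph

namespace PerfectBinaryTree

theorem log_two_succ_le_iff {m h : ℕ} : Nat.log 2 (m + 1) ≤ h ↔ m < 2 ^ (h + 1) - 1 := by
  rw [← Nat.lt_succ_iff, Nat.log_lt_iff_lt_pow one_lt_two m.succ_ne_zero]
  have := Nat.one_le_two_pow (n := h + 1)
  omega

theorem log_two_succ_of_child {m c : ℕ} (hc : c = 2 * m + 1 ∨ c = 2 * m + 2) :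
    Nat.log 2 (c + 1) = Nat.log 2 (m + 1) + 1 := by
  have hdiv : (c + 1) / 2 = m + 1 := by omega
  have hpos : 1 ≤ Nat.log 2 (c + 1) := Nat.le_log_of_pow_le one_lt_two (by omega)
  have := Nat.log_div_base 2 (c + 1)
  rw [hdiv] at this
  omega

def oddHeightIndices (h : ℕ) : Finset ℕ :=
  (range (2 ^ (h + 1) - 1)).filter fun m => (h - Nat.log 2 (m + 1)) % 2 = 1

theorem mem_oddHeightIndices {h m : ℕ} :
    m ∈ oddHeightIndices h ↔ (h - Nat.log 2 (m + 1)) % 2 = 1 := by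
  rw [oddHeightIndices, mem_filter, mem_range, ← log_two_succ_le_iff]
  omega

theorem card_oddHeightIndices_succ_add (h : ℕ) :
    #(oddHeightIndices (h + 1)) + #(oddHeightIndices h) = 2 ^ (h + 1) - 1 := by
  have hflip : oddHeightIndices (h + 1) =
      (range (2 ^ (h + 1) - 1)).filter fun m => ¬(h - Nat.log 2 (m + 1)) % 2 = 1 := by
    ext m
    rw [mem_oddHeightIndices, mem_filter, mem_range, ← log_two_succ_le_iff]
    omega
  rw [hflip, add_comm, oddHeightIndices, card_filter_add_card_filter_not, card_range]

theorem three_mul_card_oddHeightIndices_add_two (h : ℕ) :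
    3 * #(oddHeightIndices h) + 2 = 2 ^ (h + 1) + h % 2 := by
  induction h with
  | zero => simp [oddHeightIndices]
  | succ h ih =>
    have := card_oddHeightIndices_succ_add h
    rw [pow_succ] at *
    omega

def oddHeightCover (h : ℕ) : Finset (Fin (2 ^ (h + 1) - 1)) :=
  (oddHeightIndices h).attachFin fun _ hm => mem_range.1 (mem_filter.1 hm).1

theorem isVertexCover'_oddHeightCover (h : ℕ) :
    (perfectBinaryTree h).IsVertexCover' (oddHeightCover h) := by
  intro u v huv
  obtain ⟨-, hrel⟩ := (SimpleGraph.fromRel_adj _ _ _).1 huv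
  simp only [oddHeightCover, mem_attachFin, mem_oddHeightIndices]
  have hu := log_two_succ_le_iff.2 u.isLt
  have hv := log_two_succ_le_iff.2 v.isLt
  rcases hrel with hc | hc <;> have := log_two_succ_of_child hc <;> omega

def leftChild {n : ℕ} (v : Fin n) : Fin n :=
  if hv : 2 * (v : ℕ) + 1 < n then ⟨2 * v + 1, hv⟩ else v

theorem val_leftChild_of_mem_oddHeightCover {h : ℕ} {v : Fin (2 ^ (h + 1) - 1)}
    (hv : v ∈ oddHeightCover h) : (leftChild v : ℕ) = 2 * v + 1 := by
  rw [oddHeightCover, mem_attachFin, mem_oddHeightIndices] at hv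
  have hchild := log_two_succ_of_child (m := v) (Or.inl rfl)
  rw [leftChild, dif_pos (log_two_succ_le_iff.1 (by omega))]

theorem card_oddHeightCover_le {h : ℕ} {C : Finset (Fin (2 ^ (h + 1) - 1))}
    (hC : (perfectBinaryTree h).IsVertexCover' C) : #(oddHeightCover h) ≤ #C := by
  refine hC.matching_card_le leftChild (fun v hv => ?_) (fun v hv w hw hvw => ?_) fun v hv => ?_
  · have := val_leftChild_of_mem_oddHeightCover hv
    refine (SimpleGraph.fromRel_adj _ _ _).2 ⟨fun hvv => ?_, Or.inl (Or.inl this)⟩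
    rw [← hvv] at this
    omega
  · have := val_leftChild_of_mem_oddHeightCover hv
    have := val_leftChild_of_mem_oddHeightCover hw
    exact Fin.ext (by rw [hvw] at *; omega)
  · have hval := val_leftChild_of_mem_oddHeightCover hv
    have hchild := log_two_succ_of_child (m := v) (Or.inl rfl)
    rw [oddHeightCover, mem_attachFin, mem_oddHeightIndices] at hv ⊢
    rw [hval]
    omega

theorem three_mul_vertexCoverNumber_add_two (h : ℕ) :
    3 * (perfectBinaryTree h).vertexCoverNumber + 2 = 2 ^ (h + 1) + h % 2 := by
  rw [SimpleGraph.vertexCoverNumber_eq_card (isVertexCover'_oddHeightCover h)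
    fun _ => card_oddHeightCover_le, oddHeightCover, card_attachFin,
    three_mul_card_oddHeightIndices_add_two]

end PerfectBinaryTree

/-- Recurrence for the vertex cover number of perfect binary trees. -/
theorem vertexCoverNumber_perfectBinaryTree_recurrence (h : ℕ) (hh : 2 < h) :
    (perfectBinaryTree h).vertexCoverNumber =
      min (1 + 2 * (perfectBinaryTree (h - 1)).vertexCoverNumber)
        (2 + 4 * (perfectBinaryTree (h - 2)).vertexCoverNumber) := by
  obtain ⟨k, rfl⟩ : ∃ k, h = k + 2 := ⟨h - 2, by omega⟩
  have e0 := PerfectBinaryTree.three_mul_vertexCoverNumber_add_two (k + 2)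
  have e1 := PerfectBinaryTree.three_mul_vertexCoverNumber_add_two (k + 1)
  have e2 := PerfectBinaryTree.three_mul_vertexCoverNumber_add_two k
  rw [show k + 2 - 1 = k + 1 by rfl, Nat.add_sub_cancel]
  have p0 : 2 ^ (k + 2 + 1) = 4 * 2 ^ (k + 1) := by ring
  have p1 : 2 ^ (k + 1 + 1) = 2 * 2 ^ (k + 1) := by ring
  omega
end

section
/- Let T be a perfect binary tree of height h > 0 with n = 2^(h+1) - 1 vertices. Then the independence number of T equals (2^(h+3) - 3 + (-1)^h)/6. -/
variable {V : Type*}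

/-! The vertices whose level has the parity of the leaf level form an independent set, and a
largest one: sending every other vertex to its left child maps any independent set injectively
into it. Its sizes for heights `h` and `h + 1` add up to the `2 ^ (h + 2) - 1` vertices of the
taller tree, and this recurrence solves to the closed form. -/

open Finset

lemma Nat.count_add_count_of_iff_not {p q : ℕ → Prop} [DecidablePred p] [DecidablePred q]
    (hqp : ∀ m, q m ↔ ¬ p m) (n : ℕ) : Nat.count p n + Nat.count q n = n := by
  rw [Nat.count_eq_card_filter_range, Nat.count_eq_card_filter_range,
    filter_congr fun m _ => hqp m, card_filter_add_card_filter_not, card_range]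

lemma Fin.card_filter_univ_val_eq_count (n : ℕ) (P : ℕ → Prop) [DecidablePred P] :
    #{v : Fin n | P v} = Nat.count P n := by
  rw [Nat.count_eq_card_filter_range, ← Nat.Iio_eq_range, ← Fin.map_valEmbedding_univ,
    filter_map, card_map]
  rfl

lemma SimpleGraph.indepNumber_eq_card {G : SimpleGraph V} {S : Finset V} (hS : G.IsIndepSet' S)
    (hmax : ∀ W, G.IsIndepSet' W → #W ≤ #S) : G.indepNumber = #S :=
  IsGreatest.csSup_eq ⟨⟨S, hS, rfl⟩, by rintro k ⟨W, hW, rfl⟩; exact hmax W hW⟩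

lemma SimpleGraph.IsIndepSet'.card_le_of_retraction {G : SimpleGraph V} {W S : Finset V}
    (hW : G.IsIndepSet' W) (f : V → V) (hfS : ∀ v, f v ∈ S) (hfix : ∀ v ∈ S, f v = v)
    (hadj : ∀ v ∉ S, G.Adj v (f v)) (hinj : Set.InjOn f (↑S)ᶜ) : #W ≤ #S := by
  refine card_le_card_of_injOn f (fun v _ => hfS v) fun u hu v hv huv => ?_
  by_cases huS : u ∈ S <;> by_cases hvS : v ∈ S
  · rwa [hfix u huS, hfix v hvS] at huv
  · exact absurd (hadj v hvS) (by rw [← huv, hfix u huS]; exact hW v hv u hu)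
  · exact absurd (hadj u huS) (by rw [huv, hfix v hvS]; exact hW u hu v hv)
  · exact hinj huS hvS huv

lemma heapHeight_child {n : ℕ} {i j : Fin n}
    (hij : (j : ℕ) = 2 * i + 1 ∨ (j : ℕ) = 2 * i + 2) :
    heapHeight j = heapHeight i + 1 := by
  rw [heapHeight, Nat.log_of_one_lt_of_le one_lt_two (by omega)]
  congr 2
  omega

lemma heapHeight_le {h : ℕ} (v : Fin (2 ^ (h + 1) - 1)) : heapHeight v ≤ h :=
  Nat.lt_succ_iff.mp <| Nat.log_lt_of_lt_pow (Nat.succ_ne_zero _) (by have := v.isLt; omega)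

lemma two_mul_add_one_lt_of_heapHeight_lt {h : ℕ} {v : Fin (2 ^ (h + 1) - 1)}
    (hv : heapHeight v < h) : 2 * (v : ℕ) + 1 < 2 ^ (h + 1) - 1 := by
  have := Nat.lt_pow_of_log_lt one_lt_two hv
  have := pow_succ 2 h
  omega

lemma heapHeight_of_adj {h : ℕ} {u v : Fin (2 ^ (h + 1) - 1)}
    (huv : (perfectBinaryTree h).Adj u v) :
    heapHeight v = heapHeight u + 1 ∨ heapHeight u = heapHeight v + 1 := by
  rw [perfectBinaryTree, SimpleGraph.fromRel_adj] at huv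
  exact huv.2.imp heapHeight_child heapHeight_child

def leafParityVertices (h : ℕ) : Finset (Fin (2 ^ (h + 1) - 1)) :=
  {v | heapHeight v % 2 = h % 2}

lemma leafParityVertices_isIndepSet' (h : ℕ) :
    (perfectBinaryTree h).IsIndepSet' (leafParityVertices h) := by
  intro u hu v hv huv
  simp only [leafParityVertices, mem_filter, mem_univ, true_and] at hu hv
  have := heapHeight_of_adj huv
  omega

lemma heapHeight_lt_of_notMem_leafParityVertices {h : ℕ} {v : Fin (2 ^ (h + 1) - 1)}
    (hv : v ∉ leafParityVertices h) : heapHeight v < h := by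
  simp only [leafParityVertices, mem_filter, mem_univ, true_and] at hv
  have := heapHeight_le v
  omega

def descendToLeafParity (h : ℕ) (v : Fin (2 ^ (h + 1) - 1)) : Fin (2 ^ (h + 1) - 1) :=
  if hv : v ∈ leafParityVertices h then v
  else ⟨2 * v + 1, two_mul_add_one_lt_of_heapHeight_lt
    (heapHeight_lt_of_notMem_leafParityVertices hv)⟩

lemma SimpleGraph.IsIndepSet'.card_le_card_leafParityVertices {h : ℕ}
    {W : Finset (Fin (2 ^ (h + 1) - 1))}
    (hW : (perfectBinaryTree h).IsIndepSet' W) : #W ≤ #(leafParityVertices h) := by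
  refine hW.card_le_of_retraction (descendToLeafParity h) (fun v => ?_) (fun v hv => dif_pos hv)
    (fun v hv => ?_) (fun u hu v hv huv => ?_)
  · unfold descendToLeafParity
    split_ifs with hv
    · exact hv
    · simp only [leafParityVertices, mem_filter, mem_univ, true_and] at hv ⊢
      rw [heapHeight_child (Or.inl rfl)]
      omega
  · rw [descendToLeafParity, dif_neg hv, perfectBinaryTree, SimpleGraph.fromRel_adj]
    exact ⟨Fin.ne_of_val_ne (by dsimp only; omega), Or.inl (Or.inl rfl)⟩
  · rw [Set.mem_compl_iff, mem_coe] at hu hv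
    simp only [descendToLeafParity, dif_neg hu, dif_neg hv, Fin.ext_iff] at huv
    exact Fin.ext (by omega)

def leafParityCount (h : ℕ) : ℕ :=
  Nat.count (fun m => Nat.log 2 (m + 1) % 2 = h % 2) (2 ^ (h + 1) - 1)

lemma leafParityCount_succ_add (h : ℕ) :
    leafParityCount (h + 1) + leafParityCount h + 1 = 2 * 2 ^ (h + 1) := by
  have hpos := Nat.one_le_two_pow (n := h + 1)
  have hlower := Nat.count_add_count_of_iff_not (p := fun m => Nat.log 2 (m + 1) % 2 = h % 2)
    (q := fun m => Nat.log 2 (m + 1) % 2 = (h + 1) % 2) (fun m => by omega) (2 ^ (h + 1) - 1)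
  have hlast : Nat.count (fun k => Nat.log 2 (2 ^ (h + 1) - 1 + k + 1) % 2 = (h + 1) % 2)
      (2 ^ (h + 1)) = 2 ^ (h + 1) := by
    refine Nat.count_of_forall fun k hk => ?_
    rw [Nat.log_eq_of_pow_le_of_lt_pow (m := h + 1) (by omega)
      (by rw [pow_succ 2 (h + 1)]; omega)]
  have hupper := Nat.count_add (fun m => Nat.log 2 (m + 1) % 2 = (h + 1) % 2)
    (2 ^ (h + 1) - 1) (2 ^ (h + 1))
  have hsize : 2 ^ (h + 1) - 1 + 2 ^ (h + 1) = 2 ^ (h + 1 + 1) - 1 := by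
    rw [pow_succ 2 (h + 1)]; omega
  rw [hlast, hsize] at hupper
  unfold leafParityCount
  omega

lemma six_mul_leafParityCount (h : ℕ) :
    6 * (leafParityCount h : ℤ) = 2 ^ (h + 3) - 3 + (-1) ^ h := by
  induction h with
  | zero => decide
  | succ h ih =>
    have hrec : (leafParityCount (h + 1) : ℤ) + leafParityCount h + 1 = 2 * 2 ^ (h + 1) := by
      exact_mod_cast leafParityCount_succ_add h
    rw [pow_succ (-1 : ℤ)]
    linear_combination 6 * hrec - ih

lemma card_leafParityVertices (h : ℕ) : #(leafParityVertices h) = leafParityCount h :=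
  Fin.card_filter_univ_val_eq_count _ (fun m => Nat.log 2 (m + 1) % 2 = h % 2)

theorem indepNumber_perfectBinaryTree_general (h : ℕ) :
    6 * ((perfectBinaryTree h).indepNumber : ℤ) = 2 ^ (h + 3) - 3 + (-1) ^ h := by
  rw [(perfectBinaryTree h).indepNumber_eq_card (leafParityVertices_isIndepSet' h)
    fun _ hW => hW.card_le_card_leafParityVertices, card_leafParityVertices]
  exact six_mul_leafParityCount h

/-- Independence number of the perfect binary tree of height . -/
theorem indepNumber_perfectBinaryTree (h : ℕ) (hh : 0 < h) :
    6 * ((perfectBinaryTree h).indepNumber : ℤ) = 2 ^ (h + 3) - 3 + (-1) ^ h :=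
  indepNumber_perfectBinaryTree_general h
end
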